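/- Define the rational functions r_n(z; a, α, b, β | q) = Σ_{k=0}^n [(q^{-n}, abαβq^{n-1}, bq^{1/2}, bz; q)_k / ((q, bα, bβ, abq^{1/2}z; q)_k)] q^k. Then (abq^{1/2}z; q)_2 · D_{q,z} r_n(z; a, α, b, β|q) = [b q^{1-n} (1 - a q^{1/2})(1 - b q^{1/2})(1 - q^n)(1 - abαβ q^{n-1}) / ((1-q)(1 - bα)(1 - bβ))] · r_{n-1}(z; qa, α, qb, β | q) for n ≥ 1. -/

import Mathlib

open Finset MeasureTheory intervalIntegral Complex

/-- finite q-shifted factorial `(a;q)_n` -/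
noncomputable def qPoch (q a : ℂ) (n : ℕ) : ℂ := ∏ k ∈ Finset.range n, (1 - a * q ^ k)

/-- infinite q-shifted factorial `(a;q)_∞` -/
noncomputable def qPochInf (q a : ℂ) : ℂ := ∏' k : ℕ, (1 - a * q ^ k)

/-- the q-difference operator `D_{q,z}` -/
noncomputable def Dq (q : ℂ) (f : ℂ → ℂ) : ℂ → ℂ := fun z => (f z - f (q * z)) / ((1 - q) * z)

/-- the operator `T_{q,z}` -/
noncomputable def Tq (q : ℂ) (f : ℂ → ℂ) : ℂ → ℂ := fun z => z * (f z - q * f (q * z)) / (1 - q)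

/-- the Szegő polynomials `H_n(z|q)`, with `s = q^{1/2}` -/
noncomputable def szH (q s : ℂ) (n : ℕ) : ℂ → ℂ := fun z =>
  ∑ k ∈ Finset.range (n + 1), qPoch q q n / (qPoch q q k * qPoch q q (n - k)) * (z / s) ^ k

/-- the Szegő weight `w_c(z|q) = (q^{1/2}z;q)_∞ (q^{1/2}/z;q)_∞`, with `s = q^{1/2}` -/
noncomputable def wc (q s : ℂ) : ℂ → ℂ := fun z => qPochInf q (s * z) * qPochInf q (s / z)

/-- the biorthogonal rational functions `r_n(z; a, α, b, β | q)`, with `s = q^{1/2}` -/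
noncomputable def rfun (q s a α b β : ℂ) (n : ℕ) : ℂ → ℂ := fun z =>
  ∑ k ∈ Finset.range (n + 1),
    (qPoch q (q ^ (-(n : ℤ))) k * qPoch q (a * b * α * β * q ^ ((n : ℤ) - 1)) k *
        qPoch q (b * s) k * qPoch q (b * z) k) /
      (qPoch q q k * qPoch q (b * α) k * qPoch q (b * β) k * qPoch q (a * b * s * z) k) * q ^ k

/-- the four-parameter weight `w_c(z; a, α, b, β | q)`, with `s = q^{1/2}` -/
noncomputable def wc4 (q s a α b β : ℂ) : ℂ → ℂ := fun z =>
  (qPochInf q (s * z) * qPochInf q (s / z) * qPochInf q (a * b * s * z) *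
      qPochInf q (α * β * s / z)) /
    (qPochInf q (a * z) * qPochInf q (α / z) * qPochInf q (b * z) * qPochInf q (β / z))

lemma qPoch_zero (q a : ℂ) : qPoch q a 0 = 1 := by simp [qPoch]

lemma qPoch_one (q a : ℂ) : qPoch q a 1 = 1 - a := by simp [qPoch]

lemma qPoch_two (q a : ℂ) : qPoch q a 2 = (1 - a) * (1 - a * q) := by
  simp [qPoch, Finset.prod_range_succ]

lemma qPoch_succ (q a : ℂ) (k : ℕ) : qPoch q a (k+1) = qPoch q a k * (1 - a * q ^ k) :=
  Finset.prod_range_succ _ _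

lemma qPoch_shift (q a : ℂ) (k : ℕ) : qPoch q a (k+1) = (1 - a) * qPoch q (q*a) k := by
  rw [qPoch, Finset.prod_range_succ', qPoch]
  simp only [pow_zero, mul_one, pow_succ]
  rw [mul_comm]
  congr 1
  exact Finset.prod_congr rfl (fun i _ => by ring)

lemma qPoch_congr (q : ℂ) {a a' : ℂ} (h : a = a') (k : ℕ) : qPoch q a k = qPoch q a' k := by
  rw [h]

lemma qPoch_qq_ne (q : ℝ) (hq : 0 < q) (hq1 : q < 1) (k : ℕ) : qPoch (q:ℂ) (q:ℂ) k ≠ 0 := by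
  rw [qPoch, Finset.prod_ne_zero_iff]
  intro i _
  have h : ((q:ℂ)) * (q:ℂ)^i = ((q^(i+1) : ℝ) : ℂ) := by push_cast; ring
  rw [h, sub_ne_zero]
  have h2 : q^(i+1) < 1 := pow_lt_one₀ hq.le hq1 (Nat.succ_ne_zero i)
  exact_mod_cast h2.ne'


lemma brak14 (Q R x y K A4 D0 G : ℂ) (hD0 : D0 ≠ 0) (hG : G ≠ 0)
    (hxy : 1 - x*y ≠ 0) (hxyR : 1 - Q*(x*y)*R ≠ 0) :
    K * ((1-x)*A4) / (D0*((1-x*y)*G)) * (R*Q) - K * (A4*(1-Q*x*R)) / (D0*(G*(1-Q*(x*y)*R))) * (R*Q)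
      = K * A4 * (R*Q) * ((Q*R-1)*x*(1-y)) / (D0*(G*((1-x*y)*(1-Q*(x*y)*R)))) := by
  have hA : D0*((1-x*y)*G) ≠ 0 := mul_ne_zero hD0 (mul_ne_zero hxy hG)
  have hB : D0*(G*(1-Q*(x*y)*R)) ≠ 0 := mul_ne_zero hD0 (mul_ne_zero hG hxyR)
  have hC : D0*(G*((1-x*y)*(1-Q*(x*y)*R))) ≠ 0 :=
    mul_ne_zero hD0 (mul_ne_zero hG (mul_ne_zero hxy hxyR))
  rw [div_mul_eq_mul_div, div_mul_eq_mul_div, div_sub_div _ _ hA hB,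
    div_eq_div_iff (mul_ne_zero hA hB) hC]
  ring

set_option maxHeartbeats 1000000 in
lemma key14 (Q a b s α β z A1 A2 A3 A4 D1 D2 D3 G R P W : ℂ)
    (hz : z ≠ 0) (hQ0 : Q ≠ 0) (hQ1 : 1 - Q ≠ 0)
    (hD1 : D1 ≠ 0) (hD2 : D2 ≠ 0) (hD3 : D3 ≠ 0) (hG : G ≠ 0)
    (hR : 1 - Q*R ≠ 0) (hba : 1 - b*α ≠ 0) (hbb : 1 - b*β ≠ 0)
    (hE : 1 - a*b*s*z ≠ 0) (hQE : 1 - Q*(a*b*s*z) ≠ 0)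
    (hQER : 1 - Q*(a*b*s*z)*R ≠ 0) (hER : 1 - a*b*s*z*(R*Q) ≠ 0)
    (hP : P*Q ≠ 0) :
    (1 - a * b * s * z) * (1 - a * b * s * z * Q) *
      (((1 - (P * Q)⁻¹) * A1 * ((1 - a * b * α * β * W) * A2) * ((1 - b * s) * A3) * ((1 - b * z) * A4) /
              (D1 * (1 - Q * R) * ((1 - b * α) * D2) * ((1 - b * β) * D3) * ((1 - a * b * s * z) * G)) *
            (R * Q) -
          (1 - (P * Q)⁻¹) * A1 * ((1 - a * b * α * β * W) * A2) * ((1 - b * s) * A3) * (A4 * (1 - Q * (b * z) * R)) /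
              (D1 * (1 - Q * R) * ((1 - b * α) * D2) * ((1 - b * β) * D3) * (G * (1 - Q * (a * b * s * z) * R))) *
            (R * Q)) /
        ((1 - Q) * z)) =
    b * (Q * (P * Q)⁻¹) * (1 - a * s) * (1 - b * s) * (1 - P * Q) * (1 - a * b * α * β * W) /
        ((1 - Q) * (1 - b * α) * (1 - b * β)) *
      (A1 * A2 * A3 * A4 / (D1 * D2 * D3 * (G * (1 - a * b * s * z * (R * Q)) / (1 - Q * (a * b * s * z)))) * R) := by
  rw [show b * (Q * (P * Q)⁻¹) * (1 - a * s) * (1 - b * s) * (1 - P * Q)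
      = b * Q * (1 - a * s) * (1 - b * s) * ((P * Q)⁻¹ - 1) by
    rw [← show (P * Q)⁻¹ * (1 - P * Q) = (P * Q)⁻¹ - 1 by rw [mul_sub, inv_mul_cancel₀ hP, mul_one]]
    ring]
  have hxy : (1:ℂ) - (b*z)*(a*s) ≠ 0 := by
    rw [show (1:ℂ) - (b*z)*(a*s) = 1 - a*b*s*z by ring]; exact hE
  have hxyR : (1:ℂ) - Q*((b*z)*(a*s))*R ≠ 0 := by
    rw [show (1:ℂ) - Q*((b*z)*(a*s))*R = 1 - Q*(a*b*s*z)*R by ring]; exact hQER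
  have hD0 : D1*(1-Q*R)*((1-b*α)*D2)*((1-b*β)*D3) ≠ 0 :=
    mul_ne_zero (mul_ne_zero (mul_ne_zero hD1 hR) (mul_ne_zero hba hD2)) (mul_ne_zero hbb hD3)
  rw [show (1:ℂ) - a*b*s*z = 1 - (b*z)*(a*s) by ring]
  rw [show (1:ℂ) - Q*(a*b*s*z)*R = 1 - Q*((b*z)*(a*s))*R by ring]
  rw [brak14 Q R (b*z) (a*s)
      ((1 - (P*Q)⁻¹) * A1 * ((1 - a*b*α*β*W) * A2) * ((1 - b*s) * A3)) A4
      (D1*(1-Q*R)*((1-b*α)*D2)*((1-b*β)*D3)) G hD0 hG hxy hxyR]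
  rw [div_div, ← mul_div_assoc]
  rw [show D1*D2*D3*(G*(1 - a*b*s*z*(R*Q))/(1 - Q*(a*b*s*z)))
        = D1*D2*D3*(G*(1 - a*b*s*z*(R*Q)))/(1 - Q*(a*b*s*z)) from (mul_div_assoc _ _ _).symm]
  rw [div_div_eq_mul_div, div_mul_eq_mul_div, div_mul_eq_mul_div, ← mul_div_assoc, div_div]
  have hDL : D1*(1-Q*R)*((1-b*α)*D2)*((1-b*β)*D3)*(G*((1-(b*z)*(a*s))*(1-Q*((b*z)*(a*s))*R)))*((1-Q)*z) ≠ 0 :=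
    mul_ne_zero (mul_ne_zero hD0 (mul_ne_zero hG (mul_ne_zero hxy hxyR))) (mul_ne_zero hQ1 hz)
  have hDR : D1*D2*D3*(G*(1 - a*b*s*z*(R*Q)))*((1-Q)*(1-b*α)*(1-b*β)) ≠ 0 :=
    mul_ne_zero (mul_ne_zero (mul_ne_zero (mul_ne_zero hD1 hD2) hD3) (mul_ne_zero hG hER))
      (mul_ne_zero (mul_ne_zero hQ1 hba) hbb)
  rw [div_eq_div_iff hDL hDR]
  generalize (P*Q)⁻¹ = I
  ring

theorem stmt14 (q : ℝ) (hq : 0 < q) (hq1 : q < 1) (s a α b β : ℂ)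
    (hs : s = (Real.sqrt q : ℂ)) (n : ℕ) (hn : 1 ≤ n) (z : ℂ) (hz : z ≠ 0)
    (hd1 : ∀ k : ℕ, qPoch (q : ℂ) (b * α) k ≠ 0)
    (hd2 : ∀ k : ℕ, qPoch (q : ℂ) (b * β) k ≠ 0)
    (hd3 : ∀ k : ℕ, qPoch (q : ℂ) (a * b * s * z) k ≠ 0)
    (hd4 : ∀ k : ℕ, qPoch (q : ℂ) (a * b * s * ((q : ℂ) * z)) k ≠ 0) :
    qPoch (q : ℂ) (a * b * s * z) 2 * Dq (q : ℂ) (rfun (q : ℂ) s a α b β n) z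
      = b * (q : ℂ) ^ (1 - (n : ℤ)) * (1 - a * s) * (1 - b * s) * (1 - (q : ℂ) ^ n) *
          (1 - a * b * α * β * (q : ℂ) ^ ((n : ℤ) - 1)) /
          ((1 - (q : ℂ)) * (1 - b * α) * (1 - b * β)) *
          rfun (q : ℂ) s ((q : ℂ) * a) α ((q : ℂ) * b) β (n - 1) z := by
  obtain ⟨m, rfl⟩ : ∃ m, n = m + 1 := ⟨n - 1, (Nat.succ_pred_eq_of_pos hn).symm⟩
  set Q : ℂ := (q : ℂ) with hQdef
  have hQ0 : Q ≠ 0 := by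
    simp only [hQdef]
    exact_mod_cast hq.ne'
  have hQ1 : (1 : ℂ) - Q ≠ 0 := by
    rw [sub_ne_zero, hQdef]
    exact_mod_cast hq1.ne'
  have hqk : ∀ k, qPoch Q Q k ≠ 0 := qPoch_qq_ne q hq hq1
  simp only [Nat.add_sub_cancel, Dq, rfun]
  rw [← Finset.sum_sub_distrib, Finset.sum_range_succ']
  simp only [qPoch_zero, pow_zero, mul_one, one_mul, div_one, sub_self, add_zero]
  rw [Finset.sum_div, Finset.mul_sum, Finset.mul_sum]
  refine Finset.sum_congr rfl fun j hj => ?_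
  -- auxiliary equalities of qPoch arguments
  have hbz : b * (Q*z) = Q*(b*z) := by ring
  have hE' : a*b*s*(Q*z) = Q*(a*b*s*z) := by ring
  have ha1 : Q * Q^(-((m+1:ℕ) : ℤ)) = Q^(-((m:ℕ) : ℤ)) := by
    rw [← zpow_one_add₀ hQ0]; congr 1; push_cast; ring
  have ha2 : Q*(a*b*α*β*Q^(((m+1:ℕ):ℤ)-1)) = Q*a*(Q*b)*α*β*Q^(((m:ℕ):ℤ)-1) := by
    have h : Q^(((m+1:ℕ):ℤ)-1) = Q * Q^(((m:ℕ):ℤ)-1) := by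
      rw [← zpow_one_add₀ hQ0]; congr 1; push_cast; ring
    rw [h]; ring
  have ha3 : Q*(b*s) = Q*b*s := by ring
  have ha4 : Q*(b*z) = Q*b*z := by ring
  have ha5 : Q*(b*α) = Q*b*α := by ring
  have ha6 : Q*(b*β) = Q*b*β := by ring
  have ha7 : Q*a*(Q*b)*s*z = Q*(Q*(a*b*s*z)) := by ring
  -- nonvanishing facts
  have hqj : qPoch Q Q j ≠ 0 := hqk j
  have hq1j : (1:ℂ) - Q*Q^j ≠ 0 := by
    have h := hqk (j+1)
    rw [qPoch_succ] at h
    exact (mul_ne_zero_iff.mp h).2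
  obtain ⟨hbal1, hbal2⟩ : (1:ℂ) - b*α ≠ 0 ∧ qPoch Q (Q*b*α) j ≠ 0 := by
    have h := hd1 (j+1)
    rw [qPoch_shift, qPoch_congr Q ha5] at h
    exact mul_ne_zero_iff.mp h
  obtain ⟨hbbe1, hbbe2⟩ : (1:ℂ) - b*β ≠ 0 ∧ qPoch Q (Q*b*β) j ≠ 0 := by
    have h := hd2 (j+1)
    rw [qPoch_shift, qPoch_congr Q ha6] at h
    exact mul_ne_zero_iff.mp h
  obtain ⟨hEn1, hEn2⟩ : (1:ℂ) - a*b*s*z ≠ 0 ∧ qPoch Q (Q*(a*b*s*z)) j ≠ 0 := by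
    have h := hd3 (j+1)
    rw [qPoch_shift] at h
    exact mul_ne_zero_iff.mp h
  have hQE : (1:ℂ) - Q*(a*b*s*z) ≠ 0 := by
    have h := hd4 1
    rw [qPoch_one, hE'] at h
    exact h
  have hQm : Q^(m+1) ≠ 0 := pow_ne_zero _ hQ0
  have hQEj : (1:ℂ) - Q*(a*b*s*z)*Q^j ≠ 0 := by
    have h := hd4 (j+1)
    rw [qPoch_congr Q hE', qPoch_succ] at h
    exact (mul_ne_zero_iff.mp h).2
  have hQEj2 : (1:ℂ) - a*b*s*z*Q^(j+1) ≠ 0 := by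
    have h : Q*(a*b*s*z)*Q^j = a*b*s*z*Q^(j+1) := by ring
    rw [h] at hQEj
    exact hQEj
  -- relation between `(q^2 E; q)_j` and `(qE;q)_j`
  have hPeq : qPoch Q (Q*(Q*(a*b*s*z))) j
      = qPoch Q (Q*(a*b*s*z)) j * (1 - a*b*s*z*Q^(j+1)) / (1 - Q*(a*b*s*z)) := by
    have h1 := qPoch_succ Q (Q*(a*b*s*z)) j
    have h2 := qPoch_shift Q (Q*(a*b*s*z)) j
    rw [eq_div_iff hQE]
    linear_combination h1 - h2
  -- zpow normalizations
  have e1 : Q^(-((m+1:ℕ) : ℤ)) = (Q^(m+1))⁻¹ := by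
    rw [zpow_neg, zpow_natCast]
  have e2 : Q^(1-((m+1:ℕ) : ℤ)) = Q * (Q^(m+1))⁻¹ := by
    rw [zpow_sub₀ hQ0, zpow_one, zpow_natCast, div_eq_mul_inv]
  rw [qPoch_two,
      qPoch_shift Q (Q ^ (-((m+1:ℕ) : ℤ))) j,
      qPoch_shift Q (a*b*α*β*Q^(((m+1:ℕ):ℤ)-1)) j,
      qPoch_shift Q (b*s) j,
      qPoch_shift Q (b*z) j,
      qPoch_congr Q hbz (j+1),
      qPoch_succ Q (Q*(b*z)) j,
      qPoch_succ Q Q j,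
      qPoch_shift Q (b*α) j,
      qPoch_shift Q (b*β) j,
      qPoch_shift Q (a*b*s*z) j,
      qPoch_congr Q hE' (j+1),
      qPoch_succ Q (Q*(a*b*s*z)) j,
      qPoch_congr Q ha1 j,
      qPoch_congr Q ha2 j,
      qPoch_congr Q ha3 j,
      qPoch_congr Q ha4 j,
      qPoch_congr Q ha5 j,
      qPoch_congr Q ha6 j,
      qPoch_congr Q ha7 j,
      hPeq, e1, e2]
  rw [pow_succ Q j, pow_succ Q m]
  rw [pow_succ] at hQEj2
  rw [pow_succ] at hQm
  revert hq1j hQEj hQEj2 hqj hbal2 hbbe2 hEn2 hQm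
  generalize qPoch Q (Q ^ (-(m:ℤ))) j = A1
  generalize qPoch Q (Q*a*(Q*b)*α*β*Q^((m:ℤ)-1)) j = A2
  generalize qPoch Q (Q*b*s) j = A3
  generalize qPoch Q (Q*b*z) j = A4
  generalize qPoch Q Q j = D1
  generalize qPoch Q (Q*b*α) j = D2
  generalize qPoch Q (Q*b*β) j = D3
  generalize qPoch Q (Q*(a*b*s*z)) j = G
  generalize Q^j = R
  generalize Q^m = P
  generalize Q^(((m+1:ℕ):ℤ)-1) = W
  intro hD1n hQRn hD2n hD3n hGn hPQn hQERn hERn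
  exact key14 Q a b s α β z A1 A2 A3 A4 D1 D2 D3 G R P W hz hQ0 hQ1 hD1n hD2n hD3n hGn hQRn
    hbal1 hbbe1 hEn1 hQE hQERn hERn hPQn
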